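/- For every z ≥ 0, the value s*(z) maximizes the map s ↦ R_iid(s,z) over s ≥ 0; that is, R_iid(s*(z), z) = sup_{s ≥ 0} R_iid(s, z), and R_iid(s, z) ≤ R_iid(s*(z), z) for all s ≥ 0. -/

import Mathlib

noncomputable section

/-- `R_iid(s, z) = (1/2) log(1+2s) + s z/((1+2s)(σ²-D)) - s D/(σ²-D)`. -/
def Riid (σ2 D s z : ℝ) : ℝ :=
  (1 / 2) * Real.log (1 + 2 * s) + s * z / ((1 + 2 * s) * (σ2 - D)) - s * D / (σ2 - D)

/-- `s*(z) = max{0, (σ² - 3D + √((σ²-D)² + 4 z D))/(4D)}`. -/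
def sStar (σ2 D z : ℝ) : ℝ :=
  max 0 ((σ2 - 3 * D + Real.sqrt ((σ2 - D) ^ 2 + 4 * z * D)) / (4 * D))

/-- Tangent-line bound: if `(u - v)·(c v + z - D v²) ≤ 0` with `u = 1+2s`, `v = 1+2t`,
then `R_iid(s,z) ≤ R_iid(t,z)`. -/
lemma key_ineq (σ2 D : ℝ) (hc : 0 < σ2 - D) (z : ℝ) (hz : 0 ≤ z)
    (s t : ℝ) (hs : 0 ≤ s) (ht : 0 ≤ t)
    (hK : (2*s - 2*t) * ((σ2-D)*(1+2*t) + z - D*(1+2*t)^2) ≤ 0) :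
    Riid σ2 D s z ≤ Riid σ2 D t z := by
  set c := σ2 - D with hcdef
  have hu : (0:ℝ) < 1 + 2*s := by linarith
  have hv : (0:ℝ) < 1 + 2*t := by linarith
  have hL : Real.log (1+2*s) - Real.log (1+2*t) ≤ (2*s - 2*t)/(1+2*t) := by
    rw [← Real.log_div (by positivity) (by positivity)]
    have h1 := Real.log_le_sub_one_of_pos (show (0:ℝ) < (1+2*s)/(1+2*t) by positivity)
    have h2 : (1+2*s)/(1+2*t) - 1 = (2*s-2*t)/(1+2*t) := by field_simp; ring
    linarith
  have h1 : s * z / ((1+2*s) * c) - t * z / ((1+2*t) * c) ≤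
      z * (2*s - 2*t) / (2*c*(1+2*t)^2) := by
    rw [div_sub_div _ _ (by positivity) (by positivity),
        div_le_div_iff₀ (by positivity) (by positivity)]
    nlinarith [mul_nonneg (mul_nonneg (mul_nonneg hz (mul_pos hc hc).le) hv.le) (sq_nonneg (s-t)),
      sq_nonneg (s-t), hc.le, hv.le]
  have h2 : (1/2) * ((2*s-2*t)/(1+2*t)) + z * (2*s - 2*t) / (2*c*(1+2*t)^2)
      - (s - t) * D / c ≤ 0 := by
    have heq : (1/2) * ((2*s-2*t)/(1+2*t)) + z * (2*s - 2*t) / (2*c*(1+2*t)^2)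
        - (s - t) * D / c
        = (2*s - 2*t) * (c*(1+2*t) + z - D*(1+2*t)^2) / (2*c*(1+2*t)^2) := by
      field_simp
    rw [heq]
    exact div_nonpos_of_nonpos_of_nonneg hK (by positivity)
  unfold Riid
  rw [← hcdef]
  have e1 : s * D / c = (s - t) * D / c + t * D / c := by ring
  linarith [h1, hL, h2]

/-- For every `z ≥ 0`, `s*(z)` maximizes `s ↦ R_iid(s, z)` over `s ≥ 0`:
`R_iid(s, z) ≤ R_iid(s*(z), z)` for all `s ≥ 0`, and
`R_iid(s*(z), z) = sup_{s ≥ 0} R_iid(s, z)`. -/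
theorem sStar_maximizes_Riid (σ2 D : ℝ) (hD : 0 < D) (hDσ : D < σ2) (z : ℝ) (hz : 0 ≤ z) :
    (∀ s : ℝ, 0 ≤ s → Riid σ2 D s z ≤ Riid σ2 D (sStar σ2 D z) z) ∧
    Riid σ2 D (sStar σ2 D z) z = ⨆ s : Set.Ici (0 : ℝ), Riid σ2 D (s : ℝ) z := by
  have hc : 0 < σ2 - D := by linarith
  set q := Real.sqrt ((σ2 - D) ^ 2 + 4 * z * D) with hqdef
  have hq0 : 0 ≤ q := Real.sqrt_nonneg _
  have hq2 : q ^ 2 = (σ2 - D) ^ 2 + 4 * z * D := Real.sq_sqrt (by positivity)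
  have hsS : 0 ≤ sStar σ2 D z := le_max_left _ _
  have hmax : ∀ s : ℝ, 0 ≤ s → Riid σ2 D s z ≤ Riid σ2 D (sStar σ2 D z) z := by
    intro s hs
    apply key_ineq σ2 D hc z hz s _ hs hsS
    rcases le_or_gt ((σ2 - 3 * D + q) / (4 * D)) 0 with h | h
    · have hv : sStar σ2 D z = 0 := max_eq_left h
      rw [hv]
      have h3 : σ2 - 3*D + q ≤ 0 := by
        by_contra hcon
        push_neg at hcon
        have := div_pos hcon (by positivity : (0:ℝ) < 4*D)
        linarith
      have hzle : z ≤ D - (σ2 - D) := by nlinarith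
      apply mul_nonpos_of_nonneg_of_nonpos (by linarith)
      nlinarith
    · have hv : sStar σ2 D z = (σ2 - 3 * D + q) / (4 * D) := max_eq_right h.le
      rw [hv]
      have hK0 : (σ2-D)*(1+2*((σ2 - 3 * D + q) / (4 * D))) + z
          - D*(1+2*((σ2 - 3 * D + q) / (4 * D)))^2 = 0 := by
        field_simp
        nlinarith [hq2]
      rw [hK0, mul_zero]
  refine ⟨hmax, ?_⟩
  haveI : Nonempty (Set.Ici (0:ℝ)) := Set.nonempty_Ici.to_subtype
  apply le_antisymm
  · exact le_ciSup (f := fun s : Set.Ici (0:ℝ) => Riid σ2 D (s : ℝ) z)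
      ⟨Riid σ2 D (sStar σ2 D z) z, by rintro _ ⟨⟨s, hs⟩, rfl⟩; exact hmax s hs⟩
      ⟨sStar σ2 D z, hsS⟩
  · exact ciSup_le (fun ⟨s, hs⟩ => hmax s hs)
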